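/- Let (A, [·,·], ρ) be a Lie-Rinehart algebra over O and let χ ∈ O. Define a new bracket and anchor on A by ⁅x, y⁆_χ := χ·[x, y] + ρ(x)(χ)·y − ρ(y)(χ)·x and ρ_χ(x) := χ·ρ(x). Then (A, ⁅·,·⁆_χ, ρ_χ) is a Lie-Rinehart algebra over O: ⁅·,·⁆_χ is antisymmetric and satisfies the Jacobi identity, ρ_χ is O-linear and is a Lie algebra morphism from (A, ⁅·,·⁆_χ) to Der_K(O), and the Leibniz identity ⁅x, f·y⁆_χ = f·⁅x, y⁆_χ + ρ_χ(x)(f)·y holds for all f ∈ O. Moreover, multiplication by χ intertwines the two structures: χ·⁅x, y⁆_χ = [χ·x, χ·y] and ρ(χ·x) = ρ_χ(x) for all x, y ∈ A; in particular, if χ·a = 0 implies a = 0 (χ is not a zero-divisor on A), then x ↦ χ·x is an isomorphism of Lie-Rinehart algebras from (A, ⁅·,·⁆_χ, ρ_χ) onto the sub-Lie-Rinehart algebra χ·A of (A, [·,·], ρ). -/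
import Mathlib


/-- A Lie-Rinehart algebra over a commutative unital `K`-algebra `O`. -/
structure LieRinehart (K O A : Type*) [Field K] [CharZero K] [CommRing O] [Algebra K O]
    [AddCommGroup A] [Module K A] [Module O A] [IsScalarTower K O A] where
  bracket : A →ₗ[K] A →ₗ[K] A
  anchor : A →ₗ[O] Derivation K O O
  antisymm : ∀ a b : A, bracket a b = - bracket b a
  jacobi : ∀ a b c : A,
    bracket a (bracket b c) = bracket (bracket a b) c + bracket b (bracket a c)
  anchor_bracket : ∀ a b : A, anchor (bracket a b) = ⁅anchor a, anchor b⁆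
  leibniz : ∀ (a b : A) (f : O),
    bracket a (f • b) = f • bracket a b + (anchor a) f • b

variable {K O A : Type*} [Field K] [CharZero K] [CommRing O] [Algebra K O]
  [AddCommGroup A] [Module K A] [Module O A] [IsScalarTower K O A]

/-- The twisted bracket `⁅x, y⁆_χ = χ•[x,y] + ρ(x)(χ)•y − ρ(y)(χ)•x`. -/
def chiBracket (L : LieRinehart K O A) (χ : O) (x y : A) : A :=
  χ • L.bracket x y + (L.anchor x) χ • y - (L.anchor y) χ • x

/-- The twisted anchor `ρ_χ(x) = χ•ρ(x)`. -/
def chiAnchor (L : LieRinehart K O A) (χ : O) (x : A) : Derivation K O O :=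
  χ • L.anchor x

lemma br_smul_left (L : LieRinehart K O A) (f : O) (a b : A) :
    L.bracket (f • a) b = f • L.bracket a b - (L.anchor b) f • a := by
  rw [L.antisymm, L.leibniz, L.antisymm b a]
  module

lemma anchor_br_apply (L : LieRinehart K O A) (a b : A) (f : O) :
    L.anchor (L.bracket a b) f = L.anchor a (L.anchor b f) - L.anchor b (L.anchor a f) := by
  rw [L.anchor_bracket]; rfl

/-- For every `χ ∈ O`, the twisted bracket `⁅·,·⁆_χ` and anchor `ρ_χ`
make `A` a Lie-Rinehart algebra over `O`; multiplication by `χ` intertwines the twisted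
structure with the original one, `χ•⁅x,y⁆_χ = [χ•x, χ•y]` and `ρ(χ•x) = ρ_χ(x)`, the
submodule `χ·A` is closed under `[·,·]`, and if `χ` is not a zero-divisor on `A` then
`x ↦ χ•x` is injective, hence an isomorphism of Lie-Rinehart algebras from
`(A, ⁅·,·⁆_χ, ρ_χ)` onto the sub-Lie-Rinehart algebra `χ·A` of `(A, [·,·], ρ)`. -/
theorem statement8 (L : LieRinehart K O A) (χ : O) :
    -- antisymmetry:
    (∀ x y : A, chiBracket L χ x y = - chiBracket L χ y x) ∧
    -- Jacobi identity:
    (∀ x y z : A, chiBracket L χ x (chiBracket L χ y z)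
        = chiBracket L χ (chiBracket L χ x y) z + chiBracket L χ y (chiBracket L χ x z)) ∧
    -- ρ_χ is additive and O-linear:
    (∀ x y : A, chiAnchor L χ (x + y) = chiAnchor L χ x + chiAnchor L χ y) ∧
    (∀ (f : O) (x : A), chiAnchor L χ (f • x) = f • chiAnchor L χ x) ∧
    -- ρ_χ is a Lie algebra morphism for ⁅·,·⁆_χ:
    (∀ x y : A, chiAnchor L χ (chiBracket L χ x y) = ⁅chiAnchor L χ x, chiAnchor L χ y⁆) ∧
    -- the Leibniz identity:
    (∀ (x y : A) (f : O), chiBracket L χ x (f • y)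
        = f • chiBracket L χ x y + (chiAnchor L χ x) f • y) ∧
    -- multiplication by χ intertwines the two structures:
    (∀ x y : A, χ • chiBracket L χ x y = L.bracket (χ • x) (χ • y)) ∧
    (∀ x : A, L.anchor (χ • x) = chiAnchor L χ x) ∧
    -- χ·A is closed under the original bracket:
    (∀ x y : A, ∃ z : A, L.bracket (χ • x) (χ • y) = χ • z) ∧
    -- if χ is not a zero-divisor on A, x ↦ χ•x is injective (hence an isomorphism
    -- of Lie-Rinehart algebras onto χ·A):
    ((∀ a : A, χ • a = 0 → a = 0) → Function.Injective (fun a : A => χ • a)) := by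

  refine ⟨?_, ?_, ?_, ?_, ?_, ?_, ?_, ?_, ?_, ?_⟩
  · intro x y
    simp only [chiBracket]
    rw [L.antisymm y x]
    module
  · intro x y z
    simp only [chiBracket, map_add, map_sub, map_smul, LinearMap.add_apply,
      LinearMap.sub_apply, LinearMap.smul_apply, L.leibniz, br_smul_left,
      anchor_br_apply, Derivation.add_apply, Derivation.sub_apply, Derivation.smul_apply,
      smul_add, smul_sub, smul_smul, smul_eq_mul]
    rw [L.jacobi x y z, L.antisymm y x]
    match_scalars <;> ring
  · intro x y
    simp only [chiAnchor, map_add, smul_add]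
  · intro f x
    simp only [chiAnchor, map_smul, smul_comm χ f]
  · intro x y
    ext f
    simp only [chiAnchor, chiBracket, map_add, map_sub, map_smul, Derivation.add_apply,
      Derivation.sub_apply, Derivation.smul_apply, anchor_br_apply,
      Derivation.commutator_apply, Derivation.leibniz, smul_eq_mul]
    ring
  · intro x y f
    simp only [chiBracket, chiAnchor, L.leibniz, map_smul, Derivation.smul_apply,
      smul_eq_mul]
    match_scalars <;> ring
  · intro x y
    simp only [chiBracket, br_smul_left, L.leibniz, map_smul, Derivation.smul_apply,
      smul_eq_mul]
    match_scalars <;> ring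
  · intro x
    simp only [chiAnchor, map_smul]
  · intro x y
    exact ⟨chiBracket L χ x y, by
      simp only [chiBracket, br_smul_left, L.leibniz, map_smul, Derivation.smul_apply,
        smul_eq_mul]
      match_scalars <;> ring⟩
  · intro h a b hab
    simp only at hab
    have := h (a - b) (by rw [smul_sub, hab, sub_self])
    exact sub_eq_zero.mp this
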